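/- Let P be a probability measure on (𝒳,ℬ) and Q a signed finite measure on (𝒳,ℬ) absolutely continuous with respect to P. Then φ(Q,P) := ∫ φ(dQ/dP) dP satisfies φ(Q,P) ≥ 0, and φ(Q,P) = 0 if and only if Q = P. -/

import Mathlib

/-!
Convexity together with `φ 1 = 0` makes `φ` nondecreasing as one moves away from `1`, and
strict convexity near `1` forbids any other zero: a zero `y ≠ 1` would force `φ` to vanish on
the whole segment from `1` to `y`, where it cannot be strictly convex. Hence `φ` is bounded below
by a positive constant off every neighbourhood of `1`, so a vanishing divergence makes every set
`{|dQ/dP - 1| ≥ δ}` `P`-null. Thus `dQ/dP = 1` almost everywhere, i.e. `Q = P`.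
-/

open MeasureTheory
open scoped ENNReal

/-- Convexity of a `[0, ∞]`-valued function; `ConvexOn ℝ` does not apply since `ℝ≥0∞` is not an
`ℝ`-module. -/
def ConvexENNReal (φ : ℝ → ℝ≥0∞) : Prop :=
  ∀ x y t : ℝ, 0 ≤ t → t ≤ 1 →
    φ (t * x + (1 - t) * y) ≤ ENNReal.ofReal t * φ x + ENNReal.ofReal (1 - t) * φ y

namespace ConvexENNReal

variable {φ : ℝ → ℝ≥0∞}

theorem apply_one_add_mul_sub_one_le (hconv : ConvexENNReal φ) (hφ1 : φ 1 = 0)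
    {t : ℝ} (ht0 : 0 ≤ t) (ht1 : t ≤ 1) (z : ℝ) : φ (1 + t * (z - 1)) ≤ φ z :=
  calc φ (1 + t * (z - 1)) = φ (t * z + (1 - t) * 1) := by ring_nf
    _ ≤ ENNReal.ofReal t * φ z := by simpa [hφ1] using hconv z 1 t ht0 ht1
    _ ≤ φ z := mul_le_of_le_one_left' (ENNReal.ofReal_le_one.2 ht1)

theorem eq_one_of_apply_eq_zero (hconv : ConvexENNReal φ) (hφ1 : φ 1 = 0)
    (hstrict : ∃ ε > (0 : ℝ), ∀ x y : ℝ, |x - 1| < ε → |y - 1| < ε → x ≠ y →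
      ∀ t : ℝ, 0 < t → t < 1 →
      φ (t * x + (1 - t) * y) < ENNReal.ofReal t * φ x + ENNReal.ofReal (1 - t) * φ y)
    {y : ℝ} (hy : φ y = 0) : y = 1 := by
  obtain ⟨ε, hε, hs⟩ := hstrict
  by_contra hy1
  have hd : 0 < |y - 1| := abs_pos.2 (sub_ne_zero.2 hy1)
  set t := min 1 (ε / (2 * |y - 1|))
  have ht0 : 0 < t := lt_min one_pos (by positivity)
  set z := 1 + t * (y - 1)
  have hz : φ z = 0 :=
    le_zero_iff.1 (hy ▸ hconv.apply_one_add_mul_sub_one_le hφ1 ht0.le (min_le_left _ _) y)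
  have hz1 : z ≠ 1 := by simp [z, ht0.ne', sub_ne_zero.2 hy1]
  have hzε : |z - 1| < ε :=
    calc |z - 1| = t * |y - 1| := by simp [z, abs_mul, abs_of_pos ht0]
      _ ≤ ε / (2 * |y - 1|) * |y - 1| := by gcongr; exact min_le_right _ _
      _ < ε := by field_simp; linarith
  have := hs z 1 hzε (by simpa using hε) hz1 (1 / 2) (by norm_num) (by norm_num)
  simp [hz, hφ1] at this

theorem exists_ne_zero_le_apply_of_le_abs_sub_one (hconv : ConvexENNReal φ) (hφ1 : φ 1 = 0)
    (hzero : ∀ y, φ y = 0 → y = 1) {δ : ℝ} (hδ : 0 < δ) :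
    ∃ c ≠ 0, ∀ z, δ ≤ |z - 1| → c ≤ φ z := by
  have hne : ∀ y ≠ 1, φ y ≠ 0 := fun y hy h => hy (hzero y h)
  refine ⟨min (φ (1 + δ)) (φ (1 - δ)),
    (lt_min (hne _ (by linarith)).bot_lt (hne _ (by linarith)).bot_lt).ne',
    fun z hz => ?_⟩
  have hz0 : 0 < |z - 1| := hδ.trans_le hz
  have hφz :=
    hconv.apply_one_add_mul_sub_one_le hφ1 (by positivity) (div_le_one_of_le₀ hz hz0.le) z
  rcases le_total 1 z with h | h
  · rw [abs_of_nonneg (sub_nonneg.2 h), div_mul_cancel₀ _ (abs_pos.1 hz0)] at hφz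
    exact (min_le_left _ _).trans hφz
  · rw [abs_of_nonpos (sub_nonpos.2 h), div_neg, neg_mul, div_mul_cancel₀ _ (abs_pos.1 hz0),
      ← sub_eq_add_neg] at hφz
    exact (min_le_right _ _).trans hφz

end ConvexENNReal

namespace MeasureTheory

variable {α : Type*} [MeasurableSpace α] {μ : Measure α}

theorem measure_eq_zero_of_lintegral_eq_zero_of_le {g : α → ℝ≥0∞} (hg : ∫⁻ x, g x ∂μ = 0)
    {s : Set α} (hs : MeasurableSet s) {c : ℝ≥0∞} (hc : c ≠ 0) (hle : ∀ x ∈ s, c ≤ g x) :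
    μ s = 0 := by
  have : c * μ s ≤ 0 :=
    calc c * μ s = ∫⁻ _ in s, c ∂μ := (setLIntegral_const s c).symm
      _ ≤ ∫⁻ x in s, g x ∂μ := setLIntegral_mono' hs hle
      _ ≤ 0 := hg ▸ setLIntegral_le_lintegral s g
  exact (mul_eq_zero.1 (le_zero_iff.1 this)).resolve_left hc

theorem ae_eq_const_of_forall_measure_le_abs_sub_eq_zero {f : α → ℝ} {a : ℝ}
    (h : ∀ δ > 0, μ {x | δ ≤ |f x - a|} = 0) : f =ᵐ[μ] fun _ => a := by
  have hsub : {x | f x ≠ a} ⊆ ⋃ n : ℕ, {x | 1 / (n + 1 : ℝ) ≤ |f x - a|} := fun x hx =>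
    let ⟨n, hn⟩ := exists_nat_one_div_lt (abs_pos.2 (sub_ne_zero.2 hx))
    Set.mem_iUnion.2 ⟨n, hn.le⟩
  exact measure_mono_null hsub (measure_iUnion_null fun n => h _ (by positivity))

theorem ae_eq_one_of_lintegral_apply_eq_zero {φ : ℝ → ℝ≥0∞} {f : α → ℝ} (hf : Measurable f)
    (hφ : ∀ δ > 0, ∃ c ≠ 0, ∀ z, δ ≤ |z - 1| → c ≤ φ z) (h0 : ∫⁻ x, φ (f x) ∂μ = 0) :
    f =ᵐ[μ] 1 := by
  refine ae_eq_const_of_forall_measure_le_abs_sub_eq_zero fun δ hδ => ?_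
  obtain ⟨c, hc, hle⟩ := hφ δ hδ
  exact measure_eq_zero_of_lintegral_eq_zero_of_le h0
    (measurableSet_le measurable_const (hf.sub measurable_const).abs) hc fun x hx => hle _ hx

theorem Measure.withDensityᵥ_one (μ : Measure α) [IsFiniteMeasure μ] :
    μ.withDensityᵥ 1 = μ.toSignedMeasure := by
  ext s hs
  rw [withDensityᵥ_apply (f := (1 : α → ℝ)) (integrable_const 1) hs,
    Measure.toSignedMeasure_apply_measurable hs]
  simp

theorem SignedMeasure.eq_toSignedMeasure_iff_rnDeriv_ae_eq_one {s : SignedMeasure α}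
    [IsFiniteMeasure μ] (h : s ≪ᵥ μ.toENNRealVectorMeasure) :
    s = μ.toSignedMeasure ↔ s.rnDeriv μ =ᵐ[μ] 1 := by
  conv_lhs => rw [← SignedMeasure.withDensityᵥ_rnDeriv_eq s μ h, ← μ.withDensityᵥ_one]
  exact (SignedMeasure.integrable_rnDeriv s μ).withDensityᵥ_eq_iff (integrable_const 1)

end MeasureTheory

/-- Let `P` be a probability measure and `Q` a signed finite measure
absolutely continuous w.r.t. `P`.  For `φ : ℝ → [0,∞]` convex with `φ(1) = 0` and
strictly convex on a neighborhood of `1`, the `φ`-divergence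
`φ(Q,P) = ∫ φ(dQ/dP) dP` is nonnegative, and it vanishes iff `Q = P`. -/
theorem stmt18_phi_divergence_nonneg_and_eq_zero_iff
    {𝒳 : Type*} [MeasurableSpace 𝒳]
    (P : Measure 𝒳) [IsProbabilityMeasure P]
    (Q : SignedMeasure 𝒳)
    (hQP : Q ≪ᵥ P.toENNRealVectorMeasure)
    (φ : ℝ → ℝ≥0∞)
    (hφ1 : φ 1 = 0)
    -- convexity of φ
    (hconv : ∀ x y t : ℝ, 0 ≤ t → t ≤ 1 →
      φ (t * x + (1 - t) * y) ≤ ENNReal.ofReal t * φ x + ENNReal.ofReal (1 - t) * φ y)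
    -- strict convexity on a neighborhood of 1
    (hstrict : ∃ ε > (0 : ℝ), ∀ x y : ℝ, |x - 1| < ε → |y - 1| < ε → x ≠ y →
      ∀ t : ℝ, 0 < t → t < 1 →
      φ (t * x + (1 - t) * y) < ENNReal.ofReal t * φ x + ENNReal.ofReal (1 - t) * φ y) :
    0 ≤ ∫⁻ x, φ (Q.rnDeriv P x) ∂P ∧
      ((∫⁻ x, φ (Q.rnDeriv P x) ∂P) = 0 ↔ Q = P.toSignedMeasure) := by
  refine ⟨zero_le, ?_⟩
  rw [SignedMeasure.eq_toSignedMeasure_iff_rnDeriv_ae_eq_one hQP]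
  have hzero : ∀ y, φ y = 0 → y = 1 := fun _ =>
    ConvexENNReal.eq_one_of_apply_eq_zero hconv hφ1 hstrict
  refine ⟨ae_eq_one_of_lintegral_apply_eq_zero (SignedMeasure.measurable_rnDeriv Q P)
    (fun _ => ConvexENNReal.exists_ne_zero_le_apply_of_le_abs_sub_one hconv hφ1 hzero),
    fun h => ?_⟩
  calc ∫⁻ x, φ (Q.rnDeriv P x) ∂P = ∫⁻ _, φ 1 ∂P := lintegral_congr_ae (h.fun_comp φ)
    _ = 0 := by simp [hφ1]
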